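/- arXiv:2101.02910 — 9 statements merged into one kernel-verified Lean document; each statement's English description precedes it below -/
import Mathlib

section
/- Let G and H be real Hilbert spaces and L, C : G → H bounded linear operators such that C is compact and L − λ̂C is invertible for some λ̂ ∈ ℝ. Then the set of eigenvalues {λ ∈ ℝ : Ker(L − λC) ≠ {0}} is a closed and discrete subset of ℝ (it has no accumulation point in ℝ). -/
/-!
With `e = L - λ̂ C` and the compact operator `T = e⁻¹ C` we have `L - λ C = e (1 - (λ - λ̂) T)`, so
`λ` is an eigenvalue of the pencil iff `λ ≠ λ̂` and `(λ - λ̂)⁻¹` is an eigenvalue of `T`. Pencil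
eigenvalues in a bounded set thus give eigenvalues of `T` bounded away from `0`, and a compact
operator has only finitely many of those: otherwise Riesz's lemma, applied along the strictly
increasing flag of spans of the eigenvectors, produces a bounded sequence whose rescaled images
under `T` are `1`-separated. So the eigenvalues are locally finite: no accumulation points, closed.
-/

open Filter Set Module End

theorem IsCompact.exists_lt_dist_lt {α : Type*} [PseudoMetricSpace α] {K : Set α}
    (hK : IsCompact K) {s : ℕ → α} (hs : ∀ n, s n ∈ K) {ε : ℝ} (hε : 0 < ε) :
    ∃ m n, m < n ∧ dist (s n) (s m) < ε := by
  obtain ⟨a, -, φ, hφ, hconv⟩ := hK.tendsto_subseq hs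
  obtain ⟨N, hN⟩ := Metric.cauchySeq_iff'.1 hconv.cauchySeq ε hε
  exact ⟨φ N, φ (N + 1), hφ N.lt_succ_self, hN (N + 1) N.le_succ⟩

section EigenvectorSpans

variable {R M : Type*} [CommRing R] [AddCommGroup M] [Module R M] {f : End R M}
  {κ : ℕ → R} {x : ℕ → M}

theorem Module.End.apply_mem_span_image (hx : ∀ i, f (x i) = κ i • x i) (s : Set ℕ) {w : M}
    (hw : w ∈ Submodule.span R (x '' s)) : f w ∈ Submodule.span R (x '' s) := by
  have hmap : (Submodule.span R (x '' s)).map f ≤ Submodule.span R (x '' s) := by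
    rw [Submodule.map_span_le]
    rintro _ ⟨i, hi, rfl⟩
    rw [hx i]
    exact Submodule.smul_mem _ _ (Submodule.subset_span ⟨i, hi, rfl⟩)
  exact hmap (Submodule.mem_map_of_mem hw)

theorem Module.End.apply_sub_smul_mem_span_image_Iio (hx : ∀ i, f (x i) = κ i • x i) (n : ℕ)
    {w : M} (hw : w ∈ Submodule.span R (x '' Iio (n + 1))) :
    f w - κ n • w ∈ Submodule.span R (x '' Iio n) := by
  have hmap : (Submodule.span R (x '' Iio (n + 1))).map (f - κ n • 1)
      ≤ Submodule.span R (x '' Iio n) := by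
    rw [Submodule.map_span_le]
    rintro _ ⟨i, hi, rfl⟩
    have hxi : (f - κ n • 1) (x i) = (κ i - κ n) • x i := by
      simp [hx i, sub_smul]
    rw [hxi]
    rcases (Nat.lt_succ_iff.1 hi).lt_or_eq with hin | rfl
    · exact Submodule.smul_mem _ _ (Submodule.subset_span ⟨i, hin, rfl⟩)
    · simp
  simpa using hmap (Submodule.mem_map_of_mem hw)

end EigenvectorSpans

theorem LinearIndependent.span_image_Iio_lt_succ {K V : Type*} [DivisionRing K]
    [AddCommGroup V] [Module K V] {x : ℕ → V} (hx : LinearIndependent K x) (n : ℕ) :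
    Submodule.span K (x '' Iio n) < Submodule.span K (x '' Iio (n + 1)) :=
  (Submodule.span_mono (image_mono (Iio_subset_Iio n.le_succ))).lt_of_not_ge fun h =>
    hx.notMem_span_image self_notMem_Iio (h (Submodule.subset_span ⟨n, n.lt_succ_self, rfl⟩))

section Riesz

variable {𝕜 X : Type*} [NontriviallyNormedField 𝕜] [NormedAddCommGroup X] [NormedSpace 𝕜 X]

theorem exists_mem_norm_le_forall_one_le_norm_sub {F F' : Submodule 𝕜 X}
    (hF : IsClosed (F : Set X)) (hlt : F < F') {c : 𝕜} (hc : 1 < ‖c‖) {R : ℝ} (hR : ‖c‖ < R) :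
    ∃ y ∈ F', ‖y‖ ≤ R ∧ ∀ z ∈ F, 1 ≤ ‖y - z‖ := by
  have hFc : IsClosed (F.comap F'.subtype : Set F') := hF.preimage continuous_subtype_val
  obtain ⟨x, hxF', hxF⟩ := SetLike.exists_of_lt hlt
  obtain ⟨⟨y, hy⟩, hyR, hyF⟩ := riesz_lemma_of_norm_lt hc hR hFc ⟨⟨x, hxF'⟩, hxF⟩
  exact ⟨y, hy, hyR, fun z hz => hyF ⟨z, hlt.le hz⟩ hz⟩

end Riesz

namespace IsCompactOperator

variable {𝕜 X : Type*} [NontriviallyNormedField 𝕜] [CompleteSpace 𝕜] [NormedAddCommGroup X]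
  [NormedSpace 𝕜 X] {T : X →L[𝕜] X}

theorem not_injective_of_hasEigenvector (hT : IsCompactOperator T) {κ : ℕ → 𝕜} {x : ℕ → X}
    (hx : ∀ n, HasEigenvector (T : End 𝕜 X) (κ n) (x n)) {δ : ℝ} (hδ : 0 < δ)
    (hκ : ∀ n, δ ≤ ‖κ n‖) : ¬ Function.Injective κ := by
  intro hinj
  have hκ0 (n : ℕ) : κ n ≠ 0 := norm_pos_iff.1 (hδ.trans_le (hκ n))
  have happly (i : ℕ) : T (x i) = κ i • x i := (hx i).apply_eq_smul
  let E (n : ℕ) : Submodule 𝕜 X := Submodule.span 𝕜 (x '' Iio n)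
  have hE_closed (n : ℕ) : IsClosed (E n : Set X) := by
    have := FiniteDimensional.span_of_finite 𝕜 ((finite_Iio n).image x)
    exact (E n).closed_of_finiteDimensional
  have hE_mono : Monotone E := fun m n hmn =>
    Submodule.span_mono (image_mono (Iio_subset_Iio hmn))
  obtain ⟨c, hc⟩ := NormedField.exists_one_lt_norm 𝕜
  choose y hyE hy_norm hy_sep using fun n =>
    exists_mem_norm_le_forall_one_le_norm_sub (hE_closed n)
      ((eigenvectors_linearIndependent' _ κ hinj x hx).span_image_Iio_lt_succ n) hc
      (lt_add_one ‖c‖)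
  let s (n : ℕ) : X := (κ n)⁻¹ • T (y n)
  -- `s n - s m = y n - z` with `z ∈ E n`, which Riesz's lemma keeps away from `y n`.
  have hs_sep {m n : ℕ} (hmn : m < n) : 1 ≤ ‖s n - s m‖ := by
    have hz : -((κ n)⁻¹ • (T (y n) - κ n • y n)) + s m ∈ E n :=
      add_mem (neg_mem (Submodule.smul_mem _ _
          (apply_sub_smul_mem_span_image_Iio happly n (hyE n))))
        (Submodule.smul_mem _ _ (hE_mono hmn (apply_mem_span_image happly _ (hyE m))))
    calc 1 ≤ ‖y n - (-((κ n)⁻¹ • (T (y n) - κ n • y n)) + s m)‖ := hy_sep n _ hz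
      _ = ‖s n - s m‖ := by
        congr 1
        simp only [s, smul_sub, inv_smul_smul₀ (hκ0 n)]
        abel
  obtain ⟨K, hK, hTK⟩ := hT.image_closedBall_subset_compact (δ⁻¹ * (‖c‖ + 1))
  have hsK (n : ℕ) : s n ∈ K := by
    refine hTK ⟨(κ n)⁻¹ • y n, ?_, by simp [s]⟩
    rw [mem_closedBall_zero_iff, norm_smul, norm_inv]
    gcongr
    exacts [hκ n, hy_norm n]
  obtain ⟨m, n, hmn, hdist⟩ := hK.exists_lt_dist_lt hsK one_pos
  exact (hs_sep hmn).not_gt (by rwa [dist_eq_norm] at hdist)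

theorem finite_setOf_le_norm_hasEigenvalue (hT : IsCompactOperator T) {δ : ℝ} (hδ : 0 < δ) :
    {μ : 𝕜 | δ ≤ ‖μ‖ ∧ HasEigenvalue (T : End 𝕜 X) μ}.Finite := by
  by_contra hinf
  let κ (n : ℕ) : 𝕜 := Set.Infinite.natEmbedding _ hinf n
  have hκ (n : ℕ) : δ ≤ ‖κ n‖ ∧ HasEigenvalue (T : End 𝕜 X) (κ n) :=
    (Set.Infinite.natEmbedding _ hinf n).2
  choose x hx using fun n => (hκ n).2.exists_hasEigenvector
  exact hT.not_injective_of_hasEigenvector hx hδ (fun n => (hκ n).1)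
    (Subtype.val_injective.comp (Set.Infinite.natEmbedding _ hinf).injective)

end IsCompactOperator

section Pencil

variable {𝕜 X Y : Type*} [NontriviallyNormedField 𝕜] [NormedAddCommGroup X] [NormedSpace 𝕜 X]
  [NormedAddCommGroup Y] [NormedSpace 𝕜 Y]

def pencilEigenvalues (L C : X →L[𝕜] Y) : Set 𝕜 :=
  {lam | LinearMap.ker ((L - lam • C : X →L[𝕜] Y) : X →ₗ[𝕜] Y) ≠ ⊥}

variable {L C : X →L[𝕜] Y} {lamHat : 𝕜} (e : X ≃L[𝕜] Y)

theorem sub_smul_apply_eq_zero_iff (he : ∀ x, e x = L x - lamHat • C x) {lam : 𝕜} {x : X} :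
    (L - lam • C) x = 0 ↔ x = (lam - lamHat) • e.symm (C x) := by
  have hsplit : L x - lam • C x = e x - (lam - lamHat) • C x := by
    rw [he]
    module
  rw [sub_apply, smul_apply, hsplit, sub_eq_zero, ← map_smul e.symm, e.eq_symm_apply]

theorem mem_pencilEigenvalues_iff (he : ∀ x, e x = L x - lamHat • C x) {lam : 𝕜} :
    lam ∈ pencilEigenvalues L C ↔
      lam ≠ lamHat ∧ HasEigenvalue (((e.symm : Y →L[𝕜] X) ∘L C : X →L[𝕜] X) : End 𝕜 X)
        (lam - lamHat)⁻¹ := by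
  rcases eq_or_ne lam lamHat with rfl | hne
  · have hker : LinearMap.ker ((L - lam • C : X →L[𝕜] Y) : X →ₗ[𝕜] Y) = ⊥ :=
      (Submodule.eq_bot_iff _).2 fun x hx => by
        simpa using (sub_smul_apply_eq_zero_iff e he).1 (LinearMap.mem_ker.1 hx)
    rw [pencilEigenvalues, mem_ofPred_eq, hker]
    exact iff_of_false (· rfl) fun h => h.1 rfl
  have hker : LinearMap.ker ((L - lam • C : X →L[𝕜] Y) : X →ₗ[𝕜] Y) =
      eigenspace (((e.symm : Y →L[𝕜] X) ∘L C : X →L[𝕜] X) : End 𝕜 X) (lam - lamHat)⁻¹ := by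
    ext x
    rw [LinearMap.mem_ker, mem_eigenspace_iff, ContinuousLinearMap.coe_coe,
      sub_smul_apply_eq_zero_iff e he, eq_comm (a := ((_ : X →L[𝕜] X) : End 𝕜 X) x),
      inv_smul_eq_iff₀ (sub_ne_zero.2 hne)]
    rfl
  rw [pencilEigenvalues, mem_ofPred_eq, hker]
  exact ⟨fun h => ⟨hne, h⟩, And.right⟩

theorem Bornology.IsBounded.finite_inter_pencilEigenvalues [CompleteSpace 𝕜]
    (hC : IsCompactOperator C) (he : ∀ x, e x = L x - lamHat • C x) {B : Set 𝕜}
    (hB : Bornology.IsBounded B) : (B ∩ pencilEigenvalues L C).Finite := by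
  obtain ⟨r, hr, hBr⟩ := hB.subset_closedBall_lt 0 lamHat
  have hT : IsCompactOperator ((e.symm : Y →L[𝕜] X) ∘L C) := hC.clm_comp (e.symm : Y →L[𝕜] X)
  refine ((hT.finite_setOf_le_norm_hasEigenvalue (inv_pos.2 hr)).preimage
    (inv_injective.comp (sub_left_injective (b := lamHat))).injOn).subset ?_
  rintro lam ⟨hlamB, hlam⟩
  obtain ⟨hne, heig⟩ := (mem_pencilEigenvalues_iff e he).1 hlam
  refine ⟨?_, heig⟩
  change r⁻¹ ≤ ‖(lam - lamHat)⁻¹‖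
  rw [norm_inv, ← dist_eq_norm]
  exact inv_anti₀ (dist_pos.2 hne) (hBr hlamB)

theorem not_accPt_pencilEigenvalues [CompleteSpace 𝕜] (hC : IsCompactOperator C)
    (he : ∀ x, e x = L x - lamHat • C x) (lam : 𝕜) :
    ¬ AccPt lam (𝓟 (pencilEigenvalues L C)) := fun hacc =>
  Set.Infinite.of_accPt (hacc.nhds_inter (Metric.closedBall_mem_nhds lam one_pos))
    (Metric.isBounded_closedBall.finite_inter_pencilEigenvalues e hC he)

end Pencil

theorem eigenvalues_closed_and_discrete_general
    (G H : Type*) [NormedAddCommGroup G] [InnerProductSpace ℝ G]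
    [NormedAddCommGroup H] [InnerProductSpace ℝ H]
    (L C : G →L[ℝ] H)
    (hC : IsCompactOperator ⇑C)
    (hinv : ∃ lamHat : ℝ, ∃ e : G ≃L[ℝ] H, ∀ x, e x = L x - lamHat • C x) :
    IsClosed {lam : ℝ | LinearMap.ker ((L - lam • C : G →L[ℝ] H) : G →ₗ[ℝ] H) ≠ ⊥} ∧
      ∀ lam : ℝ, ¬ AccPt lam (𝓟 {lam : ℝ | LinearMap.ker ((L - lam • C : G →L[ℝ] H) : G →ₗ[ℝ] H) ≠ ⊥}) := by
  obtain ⟨lamHat, e, he⟩ := hinv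
  have hdiscrete := not_accPt_pencilEigenvalues e hC he
  exact ⟨isClosed_iff_accPt.2 fun lam hacc => (hdiscrete lam hacc).elim, hdiscrete⟩

theorem eigenvalues_closed_and_discrete
    (G H : Type*) [NormedAddCommGroup G] [InnerProductSpace ℝ G] [CompleteSpace G]
    [NormedAddCommGroup H] [InnerProductSpace ℝ H] [CompleteSpace H]
    (L C : G →L[ℝ] H)
    (hC : IsCompactOperator ⇑C)
    (hinv : ∃ lamHat : ℝ, ∃ e : G ≃L[ℝ] H, ∀ x, e x = L x - lamHat • C x) :
    IsClosed {lam : ℝ | LinearMap.ker ((L - lam • C : G →L[ℝ] H) : G →ₗ[ℝ] H) ≠ ⊥} ∧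
      ∀ lam : ℝ, ¬ AccPt lam (𝓟 {lam : ℝ | LinearMap.ker ((L - lam • C : G →L[ℝ] H) : G →ₗ[ℝ] H) ≠ ⊥}) :=
  eigenvalues_closed_and_discrete_general G H L C hC hinv
end

section
/- Let G and H be real Hilbert spaces and L, C : G → H bounded linear operators such that C is compact and L − λ̂C is invertible for some λ̂ ∈ ℝ. Let λ ∈ ℝ and suppose Im(L − λC) ∩ C(Ker(L − λC)) = {0}. Then H = Im(L − λC) ⊕ C(Ker(L − λC)); that is, Im(L − λC) + C(Ker(L − λC)) = H and the two subspaces intersect only in 0. -/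
/-!
Write `T = L - λC` and `e = L - λ̂C`. Then `T = e ∘ (1 + K)` with `K = (λ̂ - λ) e⁻¹ C` compact, and
`T` has index zero: on a Hilbert space `K` lies within distance `< 1` of a finite-rank operator `A`,
so `1 + K = u (1 + F)` with `u = 1 + (K - A)` invertible (Neumann series) and `F = u⁻¹ A` of finite
rank; and `1 + F` maps the finite-dimensional space `range F` into itself, where it has the same
kernel and cokernel as on the whole space. Moreover `C` is injective on `Ker T`, because
`Cx = Tx = 0` forces `ex = 0`. So `C(Ker T)` has dimension `dim Ker T = codim Im T`, and a subspace
of that dimension meeting `Im T` only in `0` is a complement of `Im T`.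
-/

open Module Submodule

namespace LinearMap

section OneAddFiniteRank

variable {K E : Type*} [DivisionRing K] [AddCommGroup E] [Module K E] (f : Module.End K E)

lemma ker_one_add_le_range : ker (1 + f) ≤ range f := fun x hx ↦
  ⟨-x, by rw [map_neg, neg_eq_iff_eq_neg, ← add_eq_zero_iff_eq_neg']; exact hx⟩

lemma one_add_mem_range {x : E} (hx : x ∈ range f) : (1 + f) x ∈ range f :=
  add_mem hx (mem_range_self f x)

lemma range_one_add_sup_range : range (1 + f) ⊔ range f = ⊤ :=
  eq_top_iff.2 fun x _ ↦ by
    have hx : (1 + f) x - f x = x := by rw [add_apply, Module.End.one_apply, add_sub_cancel_right]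
    exact hx ▸ sub_mem (mem_sup_left (mem_range_self (1 + f) x))
      (mem_sup_right (mem_range_self f x))

abbrev restrictOneAdd : Module.End K (range f) :=
  (1 + f).restrict fun _ ↦ one_add_mem_range f

lemma range_restrictOneAdd :
    range (restrictOneAdd f) = comap (range f).subtype (range (1 + f)) := by
  rw [range_restrict]
  ext ⟨x, hx⟩
  simp only [mem_comap, subtype_apply, mem_map, mem_range]
  constructor
  · rintro ⟨z, -, hz⟩
    exact ⟨z, hz⟩
  · rintro ⟨z, rfl⟩
    refine ⟨z, ?_, rfl⟩
    simpa using sub_mem hx (mem_range_self f z)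

noncomputable def kerRestrictOneAddEquiv : ker (restrictOneAdd f) ≃ₗ[K] ker (1 + f) :=
  (LinearEquiv.ofEq _ _ (ker_restrict _)).trans
    (comapSubtypeEquivOfLe (ker_one_add_le_range f))

noncomputable def cokerRestrictOneAddEquiv :
    (range f ⧸ range (restrictOneAdd f)) ≃ₗ[K] E ⧸ range (1 + f) :=
  let q := (range (1 + f)).mkQ ∘ₗ (range f).subtype
  have hq : Function.Surjective q := by
    rw [← range_eq_top, range_comp, range_subtype, map_mkQ_eq_top, range_one_add_sup_range]
  (quotEquivOfEq _ _ (by rw [range_restrictOneAdd, ker_comp, ker_mkQ])).trans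
    (q.quotKerEquivOfSurjective hq)

variable [FiniteDimensional K (range f)]

instance finiteDimensional_quotient_range_one_add : FiniteDimensional K (E ⧸ range (1 + f)) :=
  (cokerRestrictOneAddEquiv f).finiteDimensional

lemma index_one_add : (1 + f).index = 0 := by
  calc (1 + f).index = (restrictOneAdd f).index := by
        rw [index_eq_finrank_sub, index_eq_finrank_sub, (kerRestrictOneAddEquiv f).finrank_eq,
          (cokerRestrictOneAddEquiv f).finrank_eq]
    _ = 0 := by rw [index_eq_of_finiteDimensional, sub_self]

end OneAddFiniteRank

section EquivComp

variable {R M N P : Type*} [Ring R] [AddCommGroup M] [AddCommGroup N] [AddCommGroup P]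
  [Module R M] [Module R N] [Module R P] (A : N ≃ₗ[R] P) (g : M →ₗ[R] N)

noncomputable def quotRangeEquivCompLeft :
    (N ⧸ range g) ≃ₗ[R] P ⧸ range (A.toLinearMap ∘ₗ g) :=
  Quotient.equiv _ _ A (range_comp g A.toLinearMap).symm

lemma index_equiv_comp : (A.toLinearMap ∘ₗ g).index = g.index := by
  rw [index_eq_finrank_sub, index_eq_finrank_sub, LinearEquiv.ker_comp,
    (quotRangeEquivCompLeft A g).finrank_eq]

end EquivComp

instance finiteDimensional_quotient_range_equiv_comp {K M N P : Type*} [DivisionRing K]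
    [AddCommGroup M] [AddCommGroup N] [AddCommGroup P] [Module K M] [Module K N] [Module K P]
    (A : N ≃ₗ[K] P) (g : M →ₗ[K] N) [FiniteDimensional K (N ⧸ range g)] :
    FiniteDimensional K (P ⧸ range (A.toLinearMap ∘ₗ g)) :=
  (quotRangeEquivCompLeft A g).finiteDimensional

lemma range_sup_eq_top_of_index_eq_zero {K M N : Type*} [DivisionRing K] [AddCommGroup M]
    [AddCommGroup N] [Module K M] [Module K N] {T : M →ₗ[K] N}
    [FiniteDimensional K (N ⧸ range T)] (hT : T.index = 0) {W : Submodule K N}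
    (hTW : Disjoint (range T) W) (hW : finrank K (ker T) ≤ finrank K W) :
    range T ⊔ W = ⊤ := by
  have hinj : Function.Injective ((range T).mkQ ∘ₗ W.subtype) := by
    rw [← ker_eq_bot, ker_comp, ker_mkQ, ← disjoint_iff_comap_eq_bot, disjoint_comm]
    exact hTW
  have hcoker : finrank K (N ⧸ range T) = finrank K (ker T) := by
    rw [index_eq_finrank_sub] at hT
    omega
  rw [← map_mkQ_eq_top, ← range_subtype W, ← range_comp]
  refine eq_top_of_finrank_eq (le_antisymm (Submodule.finrank_le _) ?_)
  rw [finrank_range_of_inj hinj, hcoker]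
  exact hW

end LinearMap

namespace IsCompactOperator

variable {𝕜 E F : Type*} [RCLike 𝕜] [NormedAddCommGroup E] [NormedAddCommGroup F]

theorem exists_finiteDimensional_range_norm_sub_le [NormedSpace 𝕜 E] [InnerProductSpace 𝕜 F]
    {K : E →L[𝕜] F} (hK : IsCompactOperator ⇑K) {ε : ℝ} (hε : 0 < ε) :
    ∃ A : E →L[𝕜] F, FiniteDimensional 𝕜 (LinearMap.range (A : E →ₗ[𝕜] F)) ∧ ‖K - A‖ ≤ ε := by
  obtain ⟨M, hMc, hM⟩ := hK.image_closedBall_subset_compact 1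
  obtain ⟨t, -, htfin, hcover⟩ := hMc.finite_cover_balls hε
  let V := span 𝕜 t
  have : FiniteDimensional 𝕜 V := FiniteDimensional.span_of_finite 𝕜 htfin
  refine ⟨V.starProjection ∘L K, ?_, ?_⟩
  · have hV : LinearMap.range (V.starProjection ∘L K : E →ₗ[𝕜] F) ≤ V := by
      rintro _ ⟨x, rfl⟩
      exact V.starProjection_apply_mem (K x)
    exact Submodule.finiteDimensional_of_le hV
  refine ContinuousLinearMap.opNorm_le_of_unit_norm hε.le fun x hx ↦ ?_
  obtain ⟨y, hyt, hy⟩ : ∃ y ∈ t, K x ∈ Metric.ball y ε := by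
    simpa using hcover (hM ⟨x, by simp [hx], rfl⟩)
  calc ‖(K - V.starProjection ∘L K) x‖ = ⨅ v : V, ‖K x - v‖ := starProjection_minimal (K x)
    _ ≤ ‖K x - y‖ := ciInf_le (f := fun v : V ↦ ‖K x - v‖)
        ⟨0, by rintro _ ⟨v, rfl⟩; positivity⟩ ⟨y, subset_span hyt⟩
    _ ≤ ε := (dist_eq_norm (K x) y ▸ (Metric.mem_ball.mp hy).le)

variable [InnerProductSpace 𝕜 E] [CompleteSpace E]

theorem exists_one_add_eq_mul_one_add {K : E →L[𝕜] E} (hK : IsCompactOperator ⇑K) :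
    ∃ (u : (E →L[𝕜] E)ˣ) (A : E →L[𝕜] E),
      FiniteDimensional 𝕜 (LinearMap.range (A : E →ₗ[𝕜] E)) ∧ 1 + K = u * (1 + A) := by
  obtain ⟨A, hA, hKA⟩ := hK.exists_finiteDimensional_range_norm_sub_le one_half_pos
  let u := Units.oneSub (-(K - A)) (by rw [norm_neg]; linarith)
  have hu : (u : E →L[𝕜] E) = 1 + (K - A) := sub_neg_eq_add _ _
  refine ⟨u, ↑u⁻¹ * A, ?_, ?_⟩
  · change FiniteDimensional 𝕜 (LinearMap.range
      (((u⁻¹ : (E →L[𝕜] E)ˣ) : E →ₗ[𝕜] E) ∘ₗ (A : E →ₗ[𝕜] E)))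
    rw [LinearMap.range_comp]
    infer_instance
  · rw [mul_add, mul_one, ← mul_assoc, u.mul_inv, one_mul, hu]
    abel

theorem exists_toLinearMap_one_add_eq_comp {K : E →L[𝕜] E} (hK : IsCompactOperator ⇑K) :
    ∃ (u : E ≃L[𝕜] E) (A : E →L[𝕜] E),
      FiniteDimensional 𝕜 (LinearMap.range (A : E →ₗ[𝕜] E)) ∧ ((1 + K : E →L[𝕜] E) : E →ₗ[𝕜] E) =
        u.toLinearEquiv.toLinearMap ∘ₗ (1 + (A : E →ₗ[𝕜] E)) := by
  obtain ⟨u, A, hA, hKA⟩ := hK.exists_one_add_eq_mul_one_add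
  exact ⟨.ofUnit u, A, hA, by rw [hKA]; rfl⟩

theorem index_one_add {K : E →L[𝕜] E} (hK : IsCompactOperator ⇑K) :
    ((1 + K : E →L[𝕜] E) : E →ₗ[𝕜] E).index = 0 := by
  obtain ⟨u, A, hA, hKA⟩ := hK.exists_toLinearMap_one_add_eq_comp
  rw [hKA, LinearMap.index_equiv_comp, LinearMap.index_one_add]

theorem finiteDimensional_quotient_range_one_add {K : E →L[𝕜] E} (hK : IsCompactOperator ⇑K) :
    FiniteDimensional 𝕜 (E ⧸ LinearMap.range ((1 + K : E →L[𝕜] E) : E →ₗ[𝕜] E)) := by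
  obtain ⟨u, A, hA, hKA⟩ := hK.exists_toLinearMap_one_add_eq_comp
  rw [hKA]
  infer_instance

end IsCompactOperator

theorem range_plus_C_kernel_spans_general
    (G H : Type*) [NormedAddCommGroup G] [InnerProductSpace ℝ G] [CompleteSpace G]
    [NormedAddCommGroup H] [InnerProductSpace ℝ H]
    (L C : G →L[ℝ] H)
    (hC : IsCompactOperator ⇑C)
    (hinv : ∃ lamHat : ℝ, ∃ e : G ≃L[ℝ] H, ∀ x, e x = L x - lamHat • C x)
    (lam : ℝ)
    (htrans : LinearMap.range ((L - lam • C : G →L[ℝ] H) : G →ₗ[ℝ] H) ⊓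
        Submodule.map (C : G →ₗ[ℝ] H) (LinearMap.ker ((L - lam • C : G →L[ℝ] H) : G →ₗ[ℝ] H)) = ⊥) :
    LinearMap.range ((L - lam • C : G →L[ℝ] H) : G →ₗ[ℝ] H) ⊔
        Submodule.map (C : G →ₗ[ℝ] H) (LinearMap.ker ((L - lam • C : G →L[ℝ] H) : G →ₗ[ℝ] H)) = ⊤ ∧
      LinearMap.range ((L - lam • C : G →L[ℝ] H) : G →ₗ[ℝ] H) ⊓
        Submodule.map (C : G →ₗ[ℝ] H) (LinearMap.ker ((L - lam • C : G →L[ℝ] H) : G →ₗ[ℝ] H)) = ⊥ := by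
  refine ⟨?_, htrans⟩
  obtain ⟨lamHat, e, he⟩ := hinv
  set T : G →L[ℝ] H := L - lam • C
  let K : G →L[ℝ] G := (lamHat - lam) • (e.symm : H →L[ℝ] G).comp C
  have hK : IsCompactOperator ⇑K := (hC.clm_comp (e.symm : H →L[ℝ] G)).smul (lamHat - lam)
  have hTK : (T : G →ₗ[ℝ] H) =
      e.toLinearEquiv.toLinearMap ∘ₗ ((1 + K : G →L[ℝ] G) : G →ₗ[ℝ] G) := by
    ext x
    change L x - lam • C x = e (x + (lamHat - lam) • e.symm (C x))
    rw [map_add, map_smul, e.apply_symm_apply, he, sub_smul]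
    abel
  have := hK.finiteDimensional_quotient_range_one_add
  have : FiniteDimensional ℝ (H ⧸ LinearMap.range (T : G →ₗ[ℝ] H)) := hTK ▸ inferInstance
  have hindex : (T : G →ₗ[ℝ] H).index = 0 := by
    rw [hTK, LinearMap.index_equiv_comp, hK.index_one_add]
  have hCinj :
      Function.Injective ((C : G →ₗ[ℝ] H).domRestrict (LinearMap.ker (T : G →ₗ[ℝ] H))) := by
    refine LinearMap.injective_domRestrict_iff.2 (Submodule.disjoint_def.2 fun x hTx hCx ↦ ?_)
    replace hCx : C x = 0 := hCx
    have hLx : L x = 0 := by simpa [T, hCx] using hTx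
    apply e.injective
    rw [he, hLx, hCx, smul_zero, sub_zero, map_zero]
  refine LinearMap.range_sup_eq_top_of_index_eq_zero hindex (disjoint_iff.2 htrans) ?_
  rw [← LinearMap.range_domRestrict, LinearMap.finrank_range_of_inj hCinj]

theorem range_plus_C_kernel_spans
    (G H : Type*) [NormedAddCommGroup G] [InnerProductSpace ℝ G] [CompleteSpace G]
    [NormedAddCommGroup H] [InnerProductSpace ℝ H] [CompleteSpace H]
    (L C : G →L[ℝ] H)
    (hC : IsCompactOperator ⇑C)
    (hinv : ∃ lamHat : ℝ, ∃ e : G ≃L[ℝ] H, ∀ x, e x = L x - lamHat • C x)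
    (lam : ℝ)
    (htrans : LinearMap.range ((L - lam • C : G →L[ℝ] H) : G →ₗ[ℝ] H) ⊓
        Submodule.map (C : G →ₗ[ℝ] H) (LinearMap.ker ((L - lam • C : G →L[ℝ] H) : G →ₗ[ℝ] H)) = ⊥) :
    LinearMap.range ((L - lam • C : G →L[ℝ] H) : G →ₗ[ℝ] H) ⊔
        Submodule.map (C : G →ₗ[ℝ] H) (LinearMap.ker ((L - lam • C : G →L[ℝ] H) : G →ₗ[ℝ] H)) = ⊤ ∧
      LinearMap.range ((L - lam • C : G →L[ℝ] H) : G →ₗ[ℝ] H) ⊓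
        Submodule.map (C : G →ₗ[ℝ] H) (LinearMap.ker ((L - lam • C : G →L[ℝ] H) : G →ₗ[ℝ] H)) = ⊥ :=
  range_plus_C_kernel_spans_general G H L C hC hinv lam htrans
end

section
/- Let G and H be real Hilbert spaces and L, C : G → H bounded linear operators such that C is compact and L − λ̂C is invertible for some λ̂ ∈ ℝ; let Z : H → G denote the inverse of L − λ̂C. Let λ* ∈ ℝ, set T = L − λ*C, and assume Im T ∩ C(Ker T) = {0}. Then for every x ∈ G one has T(Z(Tx)) = 0 if and only if Tx = 0; equivalently, Ker((Z∘T)²) = Ker(Z∘T), i.e. the geometric and algebraic multiplicities of the eigenvalue λ* coincide. -/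
/-! Write `Z⁻¹ = L - λ̂ C = T + (λ* - λ̂) C`. If `y = Z (T x)` lies in `Ker T`, then
`T x = Z⁻¹ y = (λ* - λ̂) C y` lies in `C (Ker T)`; it also lies in `Im T`, so the transversality
hypothesis forces `T x = 0`. -/

namespace LinearMap

variable {R M N : Type*} [Semiring R] [AddCommMonoid M] [AddCommMonoid N] [Module R M] [Module R N]

theorem apply_mem_map_ker_of_eq_add_smul {T C : M →ₗ[R] N} {e : M →ₗ[R] N} {c : R}
    (he : ∀ y, e y = T y + c • C y) {y : M} (hy : T y = 0) :
    e y ∈ (ker T).map C := by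
  rw [he, hy, zero_add, ← map_smul]
  exact Submodule.mem_map_of_mem (Submodule.smul_mem _ c hy)

theorem apply_symm_apply_eq_zero_iff_of_range_inf_map_ker_eq_bot {T C : M →ₗ[R] N}
    {e : M ≃ₗ[R] N} {c : R} (he : ∀ y, e y = T y + c • C y)
    (htrans : range T ⊓ (ker T).map C = ⊥) (x : M) :
    T (e.symm (T x)) = 0 ↔ T x = 0 := by
  refine ⟨fun h ↦ ?_, fun h ↦ by rw [h, map_zero, map_zero]⟩
  have hC : e (e.symm (T x)) ∈ (ker T).map C := apply_mem_map_ker_of_eq_add_smul he h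
  rw [e.apply_symm_apply] at hC
  have hmem : T x ∈ range T ⊓ (ker T).map C := ⟨mem_range_self T x, hC⟩
  rwa [htrans, Submodule.mem_bot] at hmem

end LinearMap

theorem geometric_eq_algebraic_multiplicity_general
    (G H : Type*) [NormedAddCommGroup G] [InnerProductSpace ℝ G]
    [NormedAddCommGroup H] [InnerProductSpace ℝ H]
    (L C : G →L[ℝ] H)
    (lamHat : ℝ) (e : G ≃L[ℝ] H) (he : ∀ x, e x = L x - lamHat • C x)
    (lamStar : ℝ)
    (htrans : LinearMap.range (L - lamStar • C).toLinearMap ⊓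
        Submodule.map C.toLinearMap (LinearMap.ker (L - lamStar • C).toLinearMap) = ⊥) :
    ∀ x : G, (L - lamStar • C) (e.symm ((L - lamStar • C) x)) = 0 ↔
      (L - lamStar • C) x = 0 := by
  have he' : ∀ y, e.toLinearEquiv y =
      (L - lamStar • C).toLinearMap y + (lamStar - lamHat) • C.toLinearMap y := by
    intro y
    simp only [ContinuousLinearEquiv.coe_toLinearEquiv, he, ContinuousLinearMap.coe_coe,
      sub_apply, smul_apply, sub_smul]
    abel
  exact LinearMap.apply_symm_apply_eq_zero_iff_of_range_inf_map_ker_eq_bot he' htrans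

theorem geometric_eq_algebraic_multiplicity
    (G H : Type*) [NormedAddCommGroup G] [InnerProductSpace ℝ G] [CompleteSpace G]
    [NormedAddCommGroup H] [InnerProductSpace ℝ H] [CompleteSpace H]
    (L C : G →L[ℝ] H)
    (hC : IsCompactOperator ⇑C)
    (lamHat : ℝ) (e : G ≃L[ℝ] H) (he : ∀ x, e x = L x - lamHat • C x)
    (lamStar : ℝ)
    (htrans : LinearMap.range (L - lamStar • C).toLinearMap ⊓
        Submodule.map C.toLinearMap (LinearMap.ker (L - lamStar • C).toLinearMap) = ⊥) :
    ∀ x : G, (L - lamStar • C) (e.symm ((L - lamStar • C) x)) = 0 ↔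
      (L - lamStar • C) x = 0 :=
  geometric_eq_algebraic_multiplicity_general G H L C lamHat e he lamStar htrans
end

section
/- Let G and H be real Hilbert spaces, let L, C : G → H be bounded linear operators such that C is compact and L − λ̂C is invertible for some λ̂ ∈ ℝ, and let N : G → H be a continuous map whose image of the unit sphere S of G is relatively compact in H. Define ψ⁺ : ℝ×ℝ×S → H by ψ⁺(s,λ,x) = Lx + sN(x) − λCx. Then ψ⁺ is proper on every bounded and closed subset of its domain: if A ⊆ ℝ×ℝ×S is closed in ℝ×ℝ×G and bounded, and K ⊆ H is compact, then A ∩ (ψ⁺)⁻¹(K) is compact. -/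
theorem psiPlus_proper_on_bounded_closed_subsets
    (G H : Type*) [NormedAddCommGroup G] [InnerProductSpace ℝ G] [CompleteSpace G]
    [NormedAddCommGroup H] [InnerProductSpace ℝ H] [CompleteSpace H]
    (L C : G →L[ℝ] H)
    (hC : IsCompactOperator ⇑C)
    (hinv : ∃ lamHat : ℝ, ∃ e : G ≃L[ℝ] H, ∀ x, e x = L x - lamHat • C x)
    (N : G → H) (hN : Continuous N)
    (hNcpt : IsCompact (closure (N '' {x : G | ‖x‖ = 1})))
    (A : Set (ℝ × ℝ × G))
    (hA_sphere : A ⊆ {p : ℝ × ℝ × G | ‖p.2.2‖ = 1})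
    (hA_closed : IsClosed A) (hA_bdd : Bornology.IsBounded A)
    (K : Set H) (hK : IsCompact K) :
    IsCompact (A ∩ (fun p : ℝ × ℝ × G =>
      L p.2.2 + p.1 • N p.2.2 - p.2.1 • C p.2.2) ⁻¹' K) := by
  open Pointwise in
  obtain ⟨lamHat, e, he⟩ := hinv
  -- continuity of ψ
  have hψ : Continuous (fun p : ℝ × ℝ × G =>
      L p.2.2 + p.1 • N p.2.2 - p.2.1 • C p.2.2) := by
    fun_prop
  -- bound on A
  obtain ⟨M, hM⟩ := hA_bdd.exists_norm_le
  -- compact building blocks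
  have hCcl : IsCompact (closure (C '' Metric.closedBall 0 1)) := by
    have := hC.isCompact_closure_image_closedBall (𝕜₁ := ℝ) (f := (C : G →ₗ[ℝ] H)) 1
    simpa using this
  have hsmul : Continuous (fun q : ℝ × H => q.1 • q.2) := continuous_smul
  set K1 : Set H := (fun q : ℝ × H => q.1 • q.2) ''
      (Set.Icc (-M) M ×ˢ closure (N '' {x : G | ‖x‖ = 1})) with hK1def
  have hK1 : IsCompact K1 := ((isCompact_Icc).prod hNcpt).image hsmul
  set K2 : Set H := (fun q : ℝ × H => q.1 • q.2) ''
      (Set.Icc (-(M + |lamHat|)) (M + |lamHat|) ×ˢ closure (C '' Metric.closedBall 0 1)) with hK2def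
  have hK2 : IsCompact K2 := ((isCompact_Icc).prod hCcl).image hsmul
  have hsum : IsCompact (K + K1 + K2) := (hK.add hK1).add hK2
  have hXcpt : IsCompact (e.symm '' (K + K1 + K2)) := hsum.image e.symm.continuous
  -- closed target set
  have hTclosed : IsClosed (A ∩ (fun p : ℝ × ℝ × G =>
      L p.2.2 + p.1 • N p.2.2 - p.2.1 • C p.2.2) ⁻¹' K) :=
    hA_closed.inter (hK.isClosed.preimage hψ)
  -- inclusion into a compact set
  apply IsCompact.of_isClosed_subset
    (((isCompact_Icc (a := -M) (b := M)).prod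
      ((isCompact_Icc (a := -M) (b := M)).prod hXcpt))) hTclosed
  rintro ⟨s, lam, x⟩ ⟨hpA, hpK⟩
  have hnorm : ‖(s, lam, x)‖ ≤ M := hM _ hpA
  have hs : |s| ≤ M := le_trans (by
    have := norm_fst_le (s, lam, x); simpa using this) hnorm
  have hlam : |lam| ≤ M := by
    have h1 : ‖(lam, x)‖ ≤ M := le_trans (norm_snd_le (s, lam, x)) hnorm
    exact le_trans (by simpa using norm_fst_le (lam, x)) h1
  have hx1 : ‖x‖ = 1 := hA_sphere hpA
  refine ⟨by rw [Set.mem_Icc]; constructor <;> [linarith [abs_le.mp hs]; exact (abs_le.mp hs).2],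
    by rw [Set.mem_Icc]; constructor <;> [linarith [abs_le.mp hlam]; exact (abs_le.mp hlam).2], ?_⟩
  -- x = e.symm (ψ p + (-s)•Nx + (lam - lamHat)•Cx)
  have hkey : e x = (L x + s • N x - lam • C x) + (-s) • N x + (lam - lamHat) • C x := by
    rw [he x]; module
  refine ⟨e x, ?_, by simp⟩
  rw [hkey]
  refine Set.add_mem_add (Set.add_mem_add hpK ?_) ?_
  · refine ⟨(-s, N x), ⟨?_, subset_closure ⟨x, hx1, rfl⟩⟩, rfl⟩
    rw [Set.mem_Icc]
    have := abs_le.mp hs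
    constructor <;> simp only [] <;> linarith
  · refine ⟨(lam - lamHat, C x), ⟨?_, subset_closure ⟨x, by simp [hx1], rfl⟩⟩, rfl⟩
    rw [Set.mem_Icc]
    have := abs_sub_abs_le_abs_sub lam lamHat
    have h2 : |lam - lamHat| ≤ M + |lamHat| := by
      calc |lam - lamHat| ≤ |lam| + |lamHat| := abs_sub _ _
        _ ≤ M + |lamHat| := by linarith
    exact abs_le.mp h2
end

section
/- Let G and H be real Hilbert spaces, let L, C : G → H be bounded linear operators such that C is compact and L − λ̂C is invertible for some λ̂ ∈ ℝ, and let N : G → H be a continuous map whose image of the unit sphere S of G is relatively compact in H. Let Σ = {(s,λ,x) ∈ ℝ×ℝ×G : ‖x‖ = 1 and Lx + sN(x) = λCx}. Then every bounded connected component of Σ is compact. -/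
theorem bounded_components_of_solution_set_are_compact
    (G H : Type*) [NormedAddCommGroup G] [InnerProductSpace ℝ G] [CompleteSpace G]
    [NormedAddCommGroup H] [InnerProductSpace ℝ H] [CompleteSpace H]
    (L C : G →L[ℝ] H)
    (hC : IsCompactOperator ⇑C)
    (hinv : ∃ lamHat : ℝ, ∃ e : G ≃L[ℝ] H, ∀ x, e x = L x - lamHat • C x)
    (N : G → H) (hN : Continuous N)
    (hNcpt : IsCompact (closure (N '' {x : G | ‖x‖ = 1}))) :
    ∀ p ∈ {q : ℝ × ℝ × G | ‖q.2.2‖ = 1 ∧ L q.2.2 + q.1 • N q.2.2 = q.2.1 • C q.2.2},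
      Bornology.IsBounded (connectedComponentIn
        {q : ℝ × ℝ × G | ‖q.2.2‖ = 1 ∧ L q.2.2 + q.1 • N q.2.2 = q.2.1 • C q.2.2} p) →
      IsCompact (connectedComponentIn
        {q : ℝ × ℝ × G | ‖q.2.2‖ = 1 ∧ L q.2.2 + q.1 • N q.2.2 = q.2.1 • C q.2.2} p) := by
  obtain ⟨lamHat, e, he⟩ := hinv
  set Sg : Set (ℝ × ℝ × G) :=
    {q : ℝ × ℝ × G | ‖q.2.2‖ = 1 ∧ L q.2.2 + q.1 • N q.2.2 = q.2.1 • C q.2.2} with hSg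
  intro p hp hbdd
  -- Sg is closed
  have hSgclosed : IsClosed Sg := by
    have h1 : IsClosed {q : ℝ × ℝ × G | ‖q.2.2‖ = 1} :=
      isClosed_eq (continuous_norm.comp (continuous_snd.comp continuous_snd)) continuous_const
    have h2 : IsClosed {q : ℝ × ℝ × G | L q.2.2 + q.1 • N q.2.2 = q.2.1 • C q.2.2} := by
      apply isClosed_eq
      · exact (L.continuous.comp (continuous_snd.comp continuous_snd)).add
          (continuous_fst.smul (hN.comp (continuous_snd.comp continuous_snd)))
      · exact (continuous_fst.comp continuous_snd).smul
          (C.continuous.comp (continuous_snd.comp continuous_snd))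
    exact h1.inter h2
  -- the component is closed in the ambient space
  have hcl : IsClosed (connectedComponentIn Sg p) := by
    rw [connectedComponentIn_eq_image hp]
    exact (hSgclosed.isClosedEmbedding_subtypeVal.isClosed_iff_image_isClosed).1
      isClosed_connectedComponent
  -- a bound for the component
  obtain ⟨R, hR⟩ := (isBounded_iff_forall_norm_le).1 hbdd
  -- compact sets
  obtain ⟨KC, hKCcpt, hKC⟩ := hC.image_closedBall_subset_compact (𝕜₁ := ℝ) (f := (C : G →ₛₗ[RingHom.id ℝ] H)) 1
  set KN := closure (N '' {x : G | ‖x‖ = 1})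
  set f : ℝ × ℝ × H × H → G := fun q => e.symm ((q.2.1 - lamHat) • q.2.2.1 - q.1 • q.2.2.2)
  have hfcont : Continuous f := by
    apply e.symm.continuous.comp
    exact (((continuous_fst.comp continuous_snd).sub continuous_const).smul
        (continuous_fst.comp (continuous_snd.comp continuous_snd))).sub
      (continuous_fst.smul (continuous_snd.comp (continuous_snd.comp continuous_snd)))
  have hKcpt : IsCompact (Set.Icc (-R) R ×ˢ Set.Icc (-R) R ×ˢ
      (f '' (Set.Icc (-R) R ×ˢ Set.Icc (-R) R ×ˢ KC ×ˢ KN))) :=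
    isCompact_Icc.prod (isCompact_Icc.prod
      ((isCompact_Icc.prod (isCompact_Icc.prod (hKCcpt.prod hNcpt))).image hfcont))
  -- the component is contained in this compact set
  apply hKcpt.of_isClosed_subset hcl
  intro q hq
  have hqS : q ∈ Sg := connectedComponentIn_subset Sg p hq
  have hqnorm : ‖q‖ ≤ R := hR q hq
  have hs : q.1 ∈ Set.Icc (-R) R := by
    have := (norm_fst_le q).trans hqnorm
    rw [Real.norm_eq_abs, abs_le] at this
    exact this
  have hlam : q.2.1 ∈ Set.Icc (-R) R := by
    have := ((norm_fst_le q.2).trans (norm_snd_le q)).trans hqnorm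
    rw [Real.norm_eq_abs, abs_le] at this
    exact this
  obtain ⟨hx1, hxeq⟩ := hqS
  refine ⟨hs, hlam, ⟨q.1, q.2.1, C q.2.2, N q.2.2⟩, ⟨hs, hlam, ?_, ?_⟩, ?_⟩
  · exact hKC ⟨q.2.2, by simp [hx1], rfl⟩
  · exact subset_closure ⟨q.2.2, hx1, rfl⟩
  · show e.symm ((q.2.1 - lamHat) • C q.2.2 - q.1 • N q.2.2) = q.2.2
    have : e q.2.2 = (q.2.1 - lamHat) • C q.2.2 - q.1 • N q.2.2 := by
      rw [he q.2.2, sub_smul]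
      have : L q.2.2 = q.2.1 • C q.2.2 - q.1 • N q.2.2 := by
        rw [← hxeq]; abel
      rw [this]; abel
    rw [← this, ContinuousLinearEquiv.symm_apply_apply]
end

section
/- For real numbers s and λ, there exists x ∈ ℓ² with ‖x‖ = 1, ξ_i = 0 for every index i ∉ {3,4}, and T₃x + sN(x) = λCx, if and only if 3s² + (λ − 2)²/4 = 1 (the ellipse in the sλ-plane with center (0,2) and half-axes 1/√3 and 2). -/
open scoped ENNReal

noncomputable abbrev EllTwo : Type := lp (fun _ : ℕ+ => ℝ) 2

lemma ellTwo_case (i : ℕ+) : i = 1 ∨ i = 2 ∨ i = 3 ∨ i = 4 ∨ 4 < (i : ℕ) := by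
  by_cases h : 4 < (i : ℕ)
  · exact Or.inr (Or.inr (Or.inr (Or.inr h)))
  · have h1 : 1 ≤ (i : ℕ) := i.one_le
    have : (i : ℕ) = 1 ∨ (i : ℕ) = 2 ∨ (i : ℕ) = 3 ∨ (i : ℕ) = 4 := by omega
    rcases this with h' | h' | h' | h'
    · exact Or.inl (PNat.coe_injective (by simpa using h'))
    · exact Or.inr (Or.inl (PNat.coe_injective (by simpa using h')))
    · exact Or.inr (Or.inr (Or.inl (PNat.coe_injective (by simpa using h'))))
    · exact Or.inr (Or.inr (Or.inr (Or.inl (PNat.coe_injective (by simpa using h')))))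

lemma build_sol (T Cop Nop : EllTwo →L[ℝ] EllTwo)
    (hT : ∀ (x : EllTwo) (i : ℕ+), T x i = if (i : ℕ) ≤ 3 then 0 else x i)
    (hCop : ∀ (x : EllTwo) (i : ℕ+), Cop x i = x i / ((i : ℕ) : ℝ))
    (hNop : ∀ x : EllTwo, Nop x 1 = -(x 2) ∧ Nop x 2 = x 1 ∧
      Nop x 3 = -(x 4) ∧ Nop x 4 = x 3 ∧ ∀ i : ℕ+, 4 < (i : ℕ) → Nop x i = 0)
    (s lam a b : ℝ) (hab : a ≠ 0 ∨ b ≠ 0)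
    (e3 : -(s * b) = lam * (a / 3)) (e4 : b + s * a = lam * (b / 4)) :
    ∃ x : EllTwo, ‖x‖ = 1 ∧ (∀ i : ℕ+, i ≠ 3 → i ≠ 4 → x i = 0) ∧
        T x + s • Nop x = lam • Cop x := by
  set y : EllTwo := lp.single 2 3 a + lp.single 2 4 b with hy
  have hy3 : y 3 = a := by
    simp [hy, lp.coeFn_add, lp.single_apply_self, lp.single_apply_ne _ _ _ (by decide : (3:ℕ+) ≠ 4)]
  have hy4 : y 4 = b := by
    simp [hy, lp.coeFn_add, lp.single_apply_self, lp.single_apply_ne _ _ _ (by decide : (4:ℕ+) ≠ 3)]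
  have hyo : ∀ i : ℕ+, i ≠ 3 → i ≠ 4 → y i = 0 := by
    intro i h3 h4
    simp [hy, lp.coeFn_add, lp.single_apply_ne _ _ _ h3, lp.single_apply_ne _ _ _ h4, Pi.single_apply, h3, h4]
  have hyne : y ≠ 0 := by
    intro h
    rcases hab with ha | hb
    · exact ha (by rw [← hy3, h]; rfl)
    · exact hb (by rw [← hy4, h]; rfl)
  have hynorm : ‖y‖ ≠ 0 := by simpa using hyne
  -- the equation for y
  have heqy : T y + s • Nop y = lam • Cop y := by
    apply lp.ext
    funext i
    have hN := hNop y
    have lhs : (⇑(T y + s • Nop y) : ∀ _ : ℕ+, ℝ) i = T y i + s * Nop y i := rfl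
    have rhs : (⇑(lam • Cop y) : ∀ _ : ℕ+, ℝ) i = lam * Cop y i := rfl
    rw [lhs, rhs, hT, hCop]
    rcases ellTwo_case i with h | h | h | h | h
    · subst h
      rw [hN.1, hyo 2 (by decide) (by decide), hyo 1 (by decide) (by decide)]
      norm_num
    · subst h
      rw [hN.2.1, hyo 1 (by decide) (by decide), hyo 2 (by decide) (by decide)]
      norm_num
    · subst h
      rw [hN.2.2.1, hy3, hy4]
      simpa using e3
    · subst h
      rw [hN.2.2.2.1, hy3, hy4]
      simpa using e4
    · rw [hN.2.2.2.2 i h, hyo i (by rintro rfl; norm_num at h) (by rintro rfl; norm_num at h)]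
      rw [if_neg (by omega)]
      simp
  refine ⟨‖y‖⁻¹ • y, ?_, ?_, ?_⟩
  · rw [norm_smul, norm_inv, norm_norm, inv_mul_cancel₀ hynorm]
  · intro i h3 h4
    have : (⇑(‖y‖⁻¹ • y) : ∀ _ : ℕ+, ℝ) i = ‖y‖⁻¹ * y i := rfl
    rw [this, hyo i h3 h4, mul_zero]
  · rw [map_smul, map_smul, map_smul, smul_comm s, smul_comm lam, ← smul_add, heqy]

theorem eigenpairs_ellipse_k_three
    (T Cop Nop : EllTwo →L[ℝ] EllTwo)
    (hT : ∀ (x : EllTwo) (i : ℕ+), T x i = if (i : ℕ) ≤ 3 then 0 else x i)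
    (hCop : ∀ (x : EllTwo) (i : ℕ+), Cop x i = x i / ((i : ℕ) : ℝ))
    (hNop : ∀ x : EllTwo, Nop x 1 = -(x 2) ∧ Nop x 2 = x 1 ∧
      Nop x 3 = -(x 4) ∧ Nop x 4 = x 3 ∧ ∀ i : ℕ+, 4 < (i : ℕ) → Nop x i = 0)
    (s lam : ℝ) :
    (∃ x : EllTwo, ‖x‖ = 1 ∧ (∀ i : ℕ+, i ≠ 3 → i ≠ 4 → x i = 0) ∧
        T x + s • Nop x = lam • Cop x) ↔
      3 * s ^ 2 + (lam - 2) ^ 2 / 4 = 1 := by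
  constructor
  · rintro ⟨x, hnorm, hsupp, heq⟩
    set a := x 3 with ha
    set b := x 4 with hb
    have h3 := congrArg (fun z : EllTwo => (z : ∀ _ : ℕ+, ℝ) 3) heq
    have h4 := congrArg (fun z : EllTwo => (z : ∀ _ : ℕ+, ℝ) 4) heq
    simp only at h3 h4
    have l3 : (⇑(T x + s • Nop x) : ∀ _ : ℕ+, ℝ) 3 = T x 3 + s * Nop x 3 := rfl
    have r3 : (⇑(lam • Cop x) : ∀ _ : ℕ+, ℝ) 3 = lam * Cop x 3 := rfl
    have l4 : (⇑(T x + s • Nop x) : ∀ _ : ℕ+, ℝ) 4 = T x 4 + s * Nop x 4 := rfl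
    have r4 : (⇑(lam • Cop x) : ∀ _ : ℕ+, ℝ) 4 = lam * Cop x 4 := rfl
    rw [l3, r3, hT, hCop, (hNop x).2.2.1] at h3
    rw [l4, r4, hT, hCop, (hNop x).2.2.2.1] at h4
    norm_num at h3 h4
    -- h3 : s * -b = lam * (a/3), h4 : b + s*a = lam*(b/4) (forms to check)
    have hab : a ≠ 0 ∨ b ≠ 0 := by
      by_contra h
      push_neg at h
      have hx : x = 0 := by
        apply lp.ext
        funext i
        by_cases h3' : i = 3
        · subst h3'; exact h.1
        by_cases h4' : i = 4
        · subst h4'; exact h.2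
        · exact hsupp i h3' h4'
      rw [hx, norm_zero] at hnorm
      norm_num at hnorm
    have key : 12 * s ^ 2 + lam ^ 2 - 4 * lam = 0 := by
      have e3' : -(3 * (s * b)) = lam * a := by field_simp at h3 ⊢; linarith
      have e4' : 4 * b + 4 * (s * a) = lam * b := by field_simp at h4 ⊢; linarith
      rcases hab with h | h
      · have : (12 * s ^ 2 + lam ^ 2 - 4 * lam) * a = 0 := by
          linear_combination (4 - lam) * e3' + 3 * s * e4'
        exact (mul_eq_zero.mp this).resolve_right h
      · have : (12 * s ^ 2 + lam ^ 2 - 4 * lam) * b = 0 := by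
          linear_combination (-4 * s) * e3' + (-lam) * e4'
        exact (mul_eq_zero.mp this).resolve_right h
    nlinarith [key]
  · intro hell
    by_cases hdeg : lam = 4 ∧ s = 0
    · exact build_sol T Cop Nop hT hCop hNop s lam 0 1 (Or.inr one_ne_zero)
        (by rw [hdeg.2]; ring) (by rw [hdeg.1]; ring)
    · refine build_sol T Cop Nop hT hCop hNop s lam (lam - 4) (4 * s) ?_ ?_ ?_
      · by_contra h
        push_neg at h
        exact hdeg ⟨by linarith [h.1], by linarith [h.2]⟩
      · have : 12 * s ^ 2 = 4 * lam - lam ^ 2 := by nlinarith [hell]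
        field_simp
        nlinarith [this]
      · ring
end

section
/- If (s, λ, x) ∈ ℝ×ℝ×ℓ² satisfies ‖x‖ = 1, T₂x + sN(x) = λCx, and λ < 3, then s = 0 and λ = 0. In other words, in the region λ < 3 of the sλ-plane the only eigenpair of the perturbed problem for k = 2 is the isolated eigenpair (0,0). -/
open scoped ENNReal

set_option maxHeartbeats 2000000 in
theorem isolated_eigenpair_k_two
    (T Cop Nop : EllTwo →L[ℝ] EllTwo)
    (hT : ∀ (x : EllTwo) (i : ℕ+), T x i = if (i : ℕ) ≤ 2 then 0 else x i)
    (hCop : ∀ (x : EllTwo) (i : ℕ+), Cop x i = x i / ((i : ℕ) : ℝ))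
    (hNop : ∀ x : EllTwo, Nop x 1 = -(x 2) ∧ Nop x 2 = x 1 ∧
      Nop x 3 = -(x 4) ∧ Nop x 4 = x 3 ∧ ∀ i : ℕ+, 4 < (i : ℕ) → Nop x i = 0)
    (s lam : ℝ) (x : EllTwo) (hx : ‖x‖ = 1)
    (heq : T x + s • Nop x = lam • Cop x) (hlam : lam < 3) :
    s = 0 ∧ lam = 0 := by
  have hc : ∀ i : ℕ+, T x i + s * Nop x i = lam * Cop x i := by
    intro i
    have h := congrArg (fun y : EllTwo => y i) heq
    simp only [lp.coeFn_add, lp.coeFn_smul] at h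
    exact h
  obtain ⟨hN1, hN2, hN3, hN4, hN5⟩ := hNop x
  have h1 := hc 1
  have h2 := hc 2
  have h3 := hc 3
  have h4 := hc 4
  rw [hT, hCop, hN1] at h1
  rw [hT, hCop, hN2] at h2
  rw [hT, hCop, hN3] at h3
  rw [hT, hCop, hN4] at h4
  norm_num at h1 h2 h3 h4
  -- h1 : -(s * x 2) = lam * x 1
  -- h2 : s * x 1 = lam * (x 2 / 2)
  -- h3 : x 3 + -(s * x 4) = lam * (x 3 / 3)
  -- h4 : x 4 + s * x 3 = lam * (x 4 / 4)
  have key3 : ((4 - lam) * (3 - lam) + 12 * s ^ 2) * x 3 = 0 := by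
    linear_combination (12 - 3 * lam) * h3 + 12 * s * h4
  have hx3 : x 3 = 0 := by
    rcases mul_eq_zero.1 key3 with h | h
    · nlinarith [sq_nonneg s]
    · exact h
  have hx4 : x 4 = 0 := by
    have key4 : (4 - lam) * x 4 = 0 := by linear_combination 4 * h4 + (-4 * s) * hx3
    rcases mul_eq_zero.1 key4 with h | h
    · nlinarith
    · exact h
  by_contra hcon
  push_neg at hcon
  have key2 : (2 * s ^ 2 + lam ^ 2) * x 2 = 0 := by
    linear_combination -2 * s * h1 - 2 * lam * h2
  have hx2 : x 2 = 0 := by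
    rcases mul_eq_zero.1 key2 with h | h
    · exfalso
      rcases eq_or_ne s 0 with hs | hs
      · have hl := hcon hs
        nlinarith [sq_nonneg lam, sq_abs lam, abs_pos.2 hl]
      · nlinarith [sq_nonneg lam, abs_pos.2 hs, sq_abs s]
    · exact h
  have hA : lam * x 1 = 0 := by linear_combination -h1 - s * hx2
  have hB : s * x 1 = 0 := by linear_combination h2 + lam / 2 * hx2
  have hx1 : x 1 = 0 := by
    rcases eq_or_ne s 0 with hs | hs
    · have hl := hcon hs
      exact (mul_eq_zero.1 hA).resolve_left hl
    · exact (mul_eq_zero.1 hB).resolve_left hs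
  have hzero : ∀ i : ℕ+, x i = 0 := by
    intro i
    by_cases h5 : 4 < (i : ℕ)
    · have h := hc i
      rw [hT, hCop, hN5 i h5] at h
      have hle : ¬ (i : ℕ) ≤ 2 := by omega
      rw [if_neg hle] at h
      have hi5 : (5 : ℝ) ≤ ((i : ℕ) : ℝ) := by exact_mod_cast h5
      have hine : ((i : ℕ) : ℝ) ≠ 0 := by linarith
      obtain ⟨a, ha⟩ : ∃ a : ℝ, x i = a := ⟨_, rfl⟩
      obtain ⟨c, hcc⟩ : ∃ c : ℝ, ((i : ℕ) : ℝ) = c := ⟨_, rfl⟩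
      rw [ha, hcc] at h
      rw [hcc] at hine hi5
      rw [ha]
      have key : (c - lam) * a = 0 := by
        have h' : a * c = lam * a := by
          calc a * c = (a + s * 0) * c := by ring
          _ = lam * (a / c) * c := by rw [h]
          _ = lam * a := by rw [mul_assoc, div_mul_cancel₀ _ hine]
        linear_combination h'
      rcases mul_eq_zero.1 key with h' | h'
      · exfalso; linarith
      · exact h'
    · have h1le : 1 ≤ (i : ℕ) := i.one_le
      have : (i : ℕ) = 1 ∨ (i : ℕ) = 2 ∨ (i : ℕ) = 3 ∨ (i : ℕ) = 4 := by omega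
      rcases this with h | h | h | h
      · have : i = 1 := by exact_mod_cast h
        rw [this]; exact hx1
      · have : i = 2 := by exact_mod_cast h
        rw [this]; exact hx2
      · have : i = 3 := by exact_mod_cast h
        rw [this]; exact hx3
      · have : i = 4 := by exact_mod_cast h
        rw [this]; exact hx4
  have hx0 : x = 0 := lp.eq_zero_iff_coeFn_eq_zero.2 (funext hzero)
  rw [hx0, norm_zero] at hx
  exact one_ne_zero hx.symm
end

section
/- For real numbers s and λ, there exists x ∈ ℓ² with ‖x‖ = 1, ξ_i = 0 for every index i ∉ {1,2}, and T₁x + sN(x) = λCx, if and only if 2s² + (λ − 1)² = 1 (the ellipse in the sλ-plane with center (0,1) and half-axes 1/√2 and 1, containing the trivial eigenpairs (0,0) and (0,2)). -/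
open scoped ENNReal

lemma norm_sq_supp (x : EllTwo) (hx : ∀ i : ℕ+, i ≠ 1 → i ≠ 2 → x i = 0) :
    ‖x‖ ^ 2 = (x 1) ^ 2 + (x 2) ^ 2 := by
  have hp : 0 < (2 : ℝ≥0∞).toReal := by norm_num
  have h := lp.norm_rpow_eq_tsum hp x
  have ht : (2 : ℝ≥0∞).toReal = (2 : ℝ) := by norm_num
  rw [ht] at h
  have hsum : ∑' i : ℕ+, ‖x i‖ ^ (2:ℝ) = ∑ i ∈ ({1,2} : Finset ℕ+), ‖x i‖ ^ (2:ℝ) := by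
    refine tsum_eq_sum ?_
    intro i hi
    simp only [Finset.mem_insert, Finset.mem_singleton, not_or] at hi
    rw [hx i hi.1 hi.2]
    simp [Real.zero_rpow (by norm_num : (2:ℝ) ≠ 0)]
  rw [hsum] at h
  have hfin : ∑ i ∈ ({1,2} : Finset ℕ+), ‖x i‖ ^ (2:ℝ) = (x 1)^2 + (x 2)^2 := by
    rw [Finset.sum_pair (by decide : (1:ℕ+) ≠ 2)]
    rw [show ((2:ℝ)) = ((2:ℕ):ℝ) by norm_num, Real.rpow_natCast, Real.rpow_natCast]
    simp [sq_abs]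
  rw [hfin] at h
  calc ‖x‖ ^ 2 = ‖x‖ ^ (2:ℝ) := by rw [show ((2:ℝ)) = ((2:ℕ):ℝ) by norm_num, Real.rpow_natCast]
  _ = _ := h

theorem eigenpairs_ellipse_k_one
    (T Cop Nop : EllTwo →L[ℝ] EllTwo)
    (hT : ∀ (x : EllTwo) (i : ℕ+), T x i = if (i : ℕ) ≤ 1 then 0 else x i)
    (hCop : ∀ (x : EllTwo) (i : ℕ+), Cop x i = x i / ((i : ℕ) : ℝ))
    (hNop : ∀ x : EllTwo, Nop x 1 = -(x 2) ∧ Nop x 2 = x 1 ∧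
      Nop x 3 = -(x 4) ∧ Nop x 4 = x 3 ∧ ∀ i : ℕ+, 4 < (i : ℕ) → Nop x i = 0)
    (s lam : ℝ) :
    (∃ x : EllTwo, ‖x‖ = 1 ∧ (∀ i : ℕ+, i ≠ 1 → i ≠ 2 → x i = 0) ∧
        T x + s • Nop x = lam • Cop x) ↔
      2 * s ^ 2 + (lam - 1) ^ 2 = 1 := by
  constructor
  · rintro ⟨x, hx1, hsupp, heq⟩
    have hnorm : (x 1) ^ 2 + (x 2) ^ 2 = 1 := by
      rw [← norm_sq_supp x hsupp, hx1]; norm_num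
    have hcoord : ∀ i : ℕ+, T x i + s * Nop x i = lam * Cop x i := by
      intro i
      have : (T x + s • Nop x) i = (lam • Cop x) i := by rw [heq]
      simp only [lp.coeFn_add, lp.coeFn_smul] at this; exact this
    have h1 := hcoord 1
    have h2 := hcoord 2
    rw [hT x 1, hCop x 1, (hNop x).1] at h1
    rw [hT x 2, hCop x 2, (hNop x).2.1] at h2
    norm_num at h1 h2
    set a := x 1
    set b := x 2
    -- h1 : -(s * b) = lam * a ; h2 : b + s * a = lam * (b/2)
    have hDa : (lam - lam^2/2 - s^2) * a = 0 := by linear_combination (lam/2 - 1) * h1 - s * h2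
    have hDb : (lam - lam^2/2 - s^2) * b = 0 := by linear_combination s * h1 + lam * h2
    linear_combination (-2*a) * hDa + (-2*b) * hDb + (2*(lam - lam^2/2 - s^2)) * hnorm
  · intro hell
    have hD : lam - lam ^ 2 / 2 - s ^ 2 = 0 := by nlinarith
    obtain ⟨a, b, hab, e1, e2⟩ : ∃ a b : ℝ, a^2 + b^2 = 1 ∧ lam*a + s*b = 0 ∧
        s*a + (1 - lam/2)*b = 0 := by
      by_cases h0 : s = 0 ∧ lam = 0
      · exact ⟨1, 0, by norm_num, by simp [h0.2], by simp [h0.1]⟩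
      · have hpos : 0 < s^2 + lam^2 := by
          rcases not_and_or.mp h0 with h | h <;> positivity
        set r := Real.sqrt (s^2 + lam^2) with hr
        have hrpos : 0 < r := Real.sqrt_pos.mpr hpos
        have hr2 : r^2 = s^2 + lam^2 := Real.sq_sqrt hpos.le
        refine ⟨-s/r, lam/r, ?_, ?_, ?_⟩
        · field_simp
          linarith [hr2]
        · field_simp; ring
        · field_simp
          linear_combination 2 * hD
    set x : EllTwo := lp.single 2 1 a + lp.single 2 2 b with hxdef
    have hx1 : x 1 = a := by
      rw [hxdef, lp.coeFn_add, Pi.add_apply, lp.single_apply_self,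
        lp.single_apply_ne 2 2 _ (by decide : (1:ℕ+) ≠ 2), add_zero]
    have hx2 : x 2 = b := by
      rw [hxdef, lp.coeFn_add, Pi.add_apply, lp.single_apply_self,
        lp.single_apply_ne 2 1 _ (by decide : (2:ℕ+) ≠ 1), zero_add]
    have hsupp : ∀ i : ℕ+, i ≠ 1 → i ≠ 2 → x i = 0 := by
      intro i hi1 hi2
      rw [hxdef, lp.coeFn_add, Pi.add_apply, lp.single_apply_ne 2 1 _ hi1,
        lp.single_apply_ne 2 2 _ hi2, add_zero]
    refine ⟨x, ?_, hsupp, ?_⟩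
    · have h2 : ‖x‖ ^ 2 = 1 := by
        rw [norm_sq_supp x hsupp, hx1, hx2, hab]
      rw [← Real.sqrt_sq (norm_nonneg x), h2, Real.sqrt_one]
    · have hN := hNop x
      ext i
      simp only [lp.coeFn_add, lp.coeFn_smul, Pi.add_apply, Pi.smul_apply, smul_eq_mul]
      rw [hT, hCop]
      by_cases hi1 : i = 1
      · subst hi1
        rw [hN.1, hx1, hx2]
        norm_num
        linarith [e1]
      · by_cases hi2 : i = 2
        · subst hi2
          rw [hN.2.1, hx1, hx2]
          norm_num
          linear_combination e2
        · rw [hsupp i hi1 hi2]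
          have hnz : Nop x i = 0 := by
            by_cases hi3 : i = 3
            · subst hi3
              rw [hN.2.2.1, hsupp 4 (by decide) (by decide)]
              simp
            · by_cases hi4 : i = 4
              · subst hi4
                rw [hN.2.2.2.1, hsupp 3 (by decide) (by decide)]
              · refine hN.2.2.2.2 i ?_
                have k1 : (i:ℕ) ≠ 1 := fun h => hi1 (PNat.coe_injective (by simp [h]))
                have k2 : (i:ℕ) ≠ 2 := fun h => hi2 (PNat.coe_injective (by simp [h]))
                have k3 : (i:ℕ) ≠ 3 := fun h => hi3 (PNat.coe_injective (by simp [h]))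
                have k4 : (i:ℕ) ≠ 4 := fun h => hi4 (PNat.coe_injective (by simp [h]))
                have k0 : 0 < (i:ℕ) := i.2
                omega
          rw [hnz]
          simp
end

section
/- For every θ ∈ (0, 2π), the set of solutions x ∈ ℓ² of the linear equation T₃x + ((1/√3)·sin θ)·N(x) = 2(1 − cos θ)·Cx is exactly the one-dimensional subspace ℝ·x(θ), where x(θ) = (1/√3)·sin θ · e₃ − (2/3)(1 − cos θ) · e₄ (the sequence whose third coordinate is (1/√3)sin θ, fourth coordinate is −(2/3)(1 − cos θ), and all other coordinates are 0). -/
set_option maxHeartbeats 1000000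


open scoped ENNReal

theorem solution_line_of_parametrized_equation_k_three
    (T Cop Nop : EllTwo →L[ℝ] EllTwo)
    (hT : ∀ (x : EllTwo) (i : ℕ+), T x i = if (i : ℕ) ≤ 3 then 0 else x i)
    (hCop : ∀ (x : EllTwo) (i : ℕ+), Cop x i = x i / ((i : ℕ) : ℝ))
    (hNop : ∀ x : EllTwo, Nop x 1 = -(x 2) ∧ Nop x 2 = x 1 ∧
      Nop x 3 = -(x 4) ∧ Nop x 4 = x 3 ∧ ∀ i : ℕ+, 4 < (i : ℕ) → Nop x i = 0) :
    ∀ θ ∈ Set.Ioo (0 : ℝ) (2 * Real.pi),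
      ∀ xθ : EllTwo,
        xθ = ((1 / Real.sqrt 3) * Real.sin θ) • lp.single 2 (3 : ℕ+) (1 : ℝ) -
          ((2 / 3) * (1 - Real.cos θ)) • lp.single 2 (4 : ℕ+) (1 : ℝ) →
        {x : EllTwo | T x + ((1 / Real.sqrt 3) * Real.sin θ) • Nop x =
            (2 * (1 - Real.cos θ)) • Cop x} =
          (Submodule.span ℝ {xθ} : Set EllTwo) ∧
        Module.finrank ℝ (Submodule.span ℝ {xθ}) = 1 := by
  intro θ hθ xθ hxθ
  obtain ⟨hθ0, hθ2⟩ := hθ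
  set s : ℝ := (1 / Real.sqrt 3) * Real.sin θ with hs
  set c : ℝ := 2 * (1 - Real.cos θ) with hc
  have hcos1 : Real.cos θ < 1 := by
    rcases lt_or_eq_of_le (Real.cos_le_one θ) with h | h
    · exact h
    · exfalso
      have := (Real.cos_eq_one_iff_of_lt_of_lt (by linarith [Real.pi_pos]) hθ2).mp h
      linarith
  have hcpos : 0 < c := by rw [hc]; linarith
  have hcle : c ≤ 4 := by
    have := Real.neg_one_le_cos θ
    rw [hc]; linarith
  have hs2 : s * s = c / 3 * (1 - c / 4) := by
    have h3 : Real.sqrt 3 * Real.sqrt 3 = 3 := Real.mul_self_sqrt (by norm_num)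
    have hpyth := Real.sin_sq_add_cos_sq θ
    have hsq3 : Real.sqrt 3 ≠ 0 := by positivity
    rw [hs, hc]
    field_simp
    nlinarith [hpyth, h3]
  -- coordinates of xθ
  have hxθ_apply : ∀ i : ℕ+, xθ i =
      s * (if i = (3 : ℕ+) then (1:ℝ) else 0) -
      ((2 / 3) * (1 - Real.cos θ)) * (if i = (4 : ℕ+) then (1:ℝ) else 0) := by
    intro i
    rw [hxθ]
    rw [lp.coeFn_sub, Pi.sub_apply, lp.coeFn_smul, lp.coeFn_smul, Pi.smul_apply,
      Pi.smul_apply, smul_eq_mul, smul_eq_mul, lp.single_apply, lp.single_apply,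
      Pi.single_apply, Pi.single_apply]
  have hxθ3 : xθ 3 = s := by rw [hxθ_apply]; norm_num
  have hxθ4 : xθ 4 = -((2 / 3) * (1 - Real.cos θ)) := by rw [hxθ_apply]; norm_num
  have hxθ1 : xθ 1 = 0 := by rw [hxθ_apply]; norm_num
  have hxθ2 : xθ 2 = 0 := by rw [hxθ_apply]; norm_num
  have hxθbig : ∀ i : ℕ+, 4 < (i : ℕ) → xθ i = 0 := by
    intro i hi
    rw [hxθ_apply, if_neg, if_neg]
    · ring
    · intro h; rw [h] at hi; norm_num at hi
    · intro h; rw [h] at hi; norm_num at hi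
  have hxθne : xθ ≠ 0 := by
    intro h
    have : xθ 4 = 0 := by rw [h]; rfl
    rw [hxθ4] at this
    nlinarith
  constructor
  · ext x
    simp only [Set.mem_setOf_eq, SetLike.mem_coe, Submodule.mem_span_singleton]
    obtain ⟨hN1, hN2, hN3, hN4, hNbig⟩ := hNop x
    constructor
    · intro hx
      have key : ∀ i : ℕ+, (if (i : ℕ) ≤ 3 then (0:ℝ) else x i) + s * Nop x i
          = c * (x i / ((i : ℕ) : ℝ)) := by
        intro i
        have h := congrArg (fun f : EllTwo => (f : ∀ _ : ℕ+, ℝ) i) hx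
        simp only [lp.coeFn_add, Pi.add_apply, lp.coeFn_smul, Pi.smul_apply,
          smul_eq_mul] at h
        rw [hT, hCop] at h
        exact h
      have e1 := key 1
      have e2 := key 2
      have e3 := key 3
      have e4 := key 4
      rw [hN1] at e1
      rw [hN2] at e2
      rw [hN3] at e3
      rw [hN4] at e4
      norm_num at e1 e2 e3 e4
      have hx1 : x 1 = 0 := by
        have hpos : 0 < c * c / 2 + s * s := by nlinarith [mul_self_nonneg s, mul_pos hcpos hcpos]
        have h0 : (c * c / 2 + s * s) * x 1 = 0 := by
          linear_combination (-(c / 2)) * e1 + s * e2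
        exact (mul_eq_zero.mp h0).resolve_left (ne_of_gt hpos)
      have hx2 : x 2 = 0 := by
        have h0 : c * (x 2 / 2) = 0 := by rw [hx1] at e2; linarith [e2]
        have : x 2 / 2 = 0 := (mul_eq_zero.mp h0).resolve_left (ne_of_gt hcpos)
        linarith
      have hx3 : c * x 3 = -3 * (s * x 4) := by linear_combination (-3 : ℝ) * e3
      have hxbig : ∀ i : ℕ+, 4 < (i : ℕ) → x i = 0 := by
        intro i hi
        have e := key i
        rw [if_neg (by omega), hNbig i hi] at e
        have hiR : (4 : ℝ) < ((i : ℕ) : ℝ) := by exact_mod_cast hi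
        have hine : ((i : ℕ) : ℝ) ≠ 0 := by linarith
        have h0 : x i * (((i : ℕ) : ℝ) - c) = 0 := by
          field_simp at e
          linarith
        exact (mul_eq_zero.mp h0).resolve_right (by linarith)
      refine ⟨-3 * x 4 / c, ?_⟩
      apply lp.ext
      funext i
      have hcoord : ((-3 * x 4 / c) • xθ) i = (-3 * x 4 / c) * xθ i := by
        rw [lp.coeFn_smul, Pi.smul_apply, smul_eq_mul]
      rw [hcoord]
      rcases lt_or_ge 4 ((i : ℕ)) with hib | hib
      · rw [hxθbig i hib, hxbig i hib]; ring
      · have hcase : (i : ℕ) = 1 ∨ (i : ℕ) = 2 ∨ (i : ℕ) = 3 ∨ (i : ℕ) = 4 := by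
          have := i.pos
          omega
        rcases hcase with h | h | h | h
        · have : i = (1 : ℕ+) := by apply PNat.coe_injective; simpa using h
          subst this
          rw [hxθ1, hx1]; ring
        · have : i = (2 : ℕ+) := by apply PNat.coe_injective; simpa using h
          subst this
          rw [hxθ2, hx2]; ring
        · have : i = (3 : ℕ+) := by apply PNat.coe_injective; simpa using h
          subst this
          rw [hxθ3, div_mul_eq_mul_div, div_eq_iff (ne_of_gt hcpos)]
          linear_combination -hx3
        · have : i = (4 : ℕ+) := by apply PNat.coe_injective; simpa using h
          subst this
          have hc3 : (2:ℝ) / 3 * (1 - Real.cos θ) = c / 3 := by rw [hc]; ring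
          rw [hxθ4, hc3, div_mul_eq_mul_div, div_eq_iff (ne_of_gt hcpos)]
          ring
    · rintro ⟨a, rfl⟩
      have hxi : ∀ i : ℕ+, (a • xθ) i = a * xθ i := by
        intro i
        rw [lp.coeFn_smul, Pi.smul_apply, smul_eq_mul]
      apply lp.ext
      funext i
      rw [lp.coeFn_add, Pi.add_apply, lp.coeFn_smul, lp.coeFn_smul,
        Pi.smul_apply, Pi.smul_apply, smul_eq_mul, smul_eq_mul, hT, hCop]
      rcases lt_or_ge 4 ((i : ℕ)) with hib | hib
      · rw [if_neg (by omega), hNbig i hib, hxi i, hxθbig i hib]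
        ring
      · have hcase : (i : ℕ) = 1 ∨ (i : ℕ) = 2 ∨ (i : ℕ) = 3 ∨ (i : ℕ) = 4 := by
          have := i.pos
          omega
        rcases hcase with h | h | h | h
        · have : i = (1 : ℕ+) := by apply PNat.coe_injective; simpa using h
          subst this
          rw [if_pos (by norm_num), hN1, hxi 1, hxi 2, hxθ1, hxθ2]
          norm_num
        · have : i = (2 : ℕ+) := by apply PNat.coe_injective; simpa using h
          subst this
          rw [if_pos (by norm_num), hN2, hxi 1, hxi 2, hxθ1, hxθ2]
          norm_num
        · have : i = (3 : ℕ+) := by apply PNat.coe_injective; simpa using h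
          subst this
          rw [if_pos (by norm_num), hN3, hxi 3, hxi 4, hxθ3, hxθ4]
          push_cast
          rw [hc]
          ring
        · have : i = (4 : ℕ+) := by apply PNat.coe_injective; simpa using h
          subst this
          rw [if_neg (by norm_num), hN4, hxi 3, hxi 4, hxθ3, hxθ4]
          push_cast
          have hc3 : ((2:ℝ) / 3) * (1 - Real.cos θ) = c / 3 := by rw [hc]; ring
          rw [hc3]
          linear_combination a * hs2
  · exact finrank_span_singleton hxθne
end
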